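/- arXiv:2603.25416 — 5 statements merged into one kernel-verified Lean document; each statement's English description precedes it below -/
import Mathlib

section
/- Let μ and ν be probability measures on ℝ with finite second moments (∫ v² dμ(v) < ∞ and ∫ v² dν(v) < ∞) and with equal first moments, ∫ v dμ(v) = ∫ v dν(v). Then the 2-Fourier metric d₂(μ, ν) = sup_{ξ ≠ 0} |ν̂(ξ) − μ̂(ξ)|/ξ² is finite. -/
open MeasureTheory
open Complex (I)

/-- The Fourier transform `μ̂(ξ) = ∫ e^{−iξv} dμ(v)` of a measure on `ℝ`. -/
noncomputable def fourierTr (μ : Measure ℝ) (ξ : ℝ) : ℂ :=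
  ∫ v, Complex.exp (-(Complex.I * ξ * v)) ∂μ

/-- The set of values `|ν̂(ξ) − μ̂(ξ)|/ξ²` over `ξ ≠ 0`, whose supremum is the
2-Fourier metric `d₂(μ, ν)`. -/
def d2Set (μ ν : Measure ℝ) : Set ℝ :=
  {r : ℝ | ∃ ξ : ℝ, ξ ≠ 0 ∧ r = ‖fourierTr ν ξ - fourierTr μ ξ‖ / ξ ^ 2}

lemma norm_exp_I_sub_one_le (x : ℝ) : ‖Complex.exp (x * I) - 1‖ ≤ |x| := by
  have h1 : ‖Complex.exp (x * I) - 1‖ ^ 2 = (Real.cos x - 1) ^ 2 + Real.sin x ^ 2 := by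
    rw [Complex.sq_norm, Complex.normSq_apply]
    simp [Complex.exp_ofReal_mul_I_re, Complex.exp_ofReal_mul_I_im]
    ring
  have h2 : Real.cos x ≥ 1 - x ^ 2 / 2 := Real.one_sub_sq_div_two_le_cos
  have h3 : Real.cos x ≤ 1 := Real.cos_le_one x
  have h4 := Real.sin_sq_add_cos_sq x
  nlinarith [norm_nonneg (Complex.exp (x * I) - 1), abs_nonneg x, sq_abs x]

lemma norm_exp_taylor (x : ℝ) : ‖Complex.exp (x * I) - 1 - x * I‖ ≤ x ^ 2 := by
  set f : ℝ → ℂ := fun t => Complex.exp (t * I) - t * I with hf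
  set f' : ℝ → ℂ := fun t => I * Complex.exp (t * I) - I with hf'
  have hderiv : ∀ t : ℝ, HasDerivAt f (f' t) t := by
    intro t
    have h1 : HasDerivAt (fun z : ℂ => Complex.exp (z * I)) (Complex.exp (t * I) * I) (t : ℂ) :=
      ((hasDerivAt_id ((t : ℂ))).mul_const I).cexp.congr_deriv (by simp only [id_eq]; ring_nf)
    have h2 : HasDerivAt (fun s : ℝ => Complex.exp (s * I)) (Complex.exp (t * I) * I) t :=
      h1.comp_ofReal
    have h3 : HasDerivAt (fun z : ℂ => z * I) I (t : ℂ) :=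
      ((hasDerivAt_id ((t : ℂ))).mul_const I).congr_deriv (by ring)
    have h4 : HasDerivAt (fun s : ℝ => (s : ℂ) * I) I t := h3.comp_ofReal
    exact (h2.sub h4).congr_deriv (by ring)
  have key : ‖f x - f 0‖ ≤ |x| * ‖x - (0:ℝ)‖ := by
    apply Convex.norm_image_sub_le_of_norm_hasDerivWithin_le
      (f' := f') (s := Set.uIcc (0:ℝ) x)
      (fun t _ => (hderiv t).hasDerivWithinAt) ?_ (convex_uIcc 0 x)
      Set.left_mem_uIcc Set.right_mem_uIcc
    intro t ht
    have : ‖f' t‖ = ‖Complex.exp (t * I) - 1‖ := by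
      have : f' t = I * (Complex.exp (t * I) - 1) := by rw [hf']; ring
      rw [this, norm_mul, Complex.norm_I, one_mul]
    rw [this]
    refine (norm_exp_I_sub_one_le t).trans ?_
    rcases Set.mem_uIcc.1 ht with ⟨h1, h2⟩ | ⟨h1, h2⟩
    · rw [abs_of_nonneg h1]; exact (le_abs_self x).trans' h2
    · rw [abs_of_nonpos h2]; exact (neg_le_abs x).trans' (by linarith)
  have hf0 : f 0 = 1 := by simp [hf]
  have : ‖f x - f 0‖ = ‖Complex.exp (x * I) - 1 - x * I‖ := by
    rw [hf0]; congr 1; rw [hf]; ring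
  rw [this] at key
  calc ‖Complex.exp (x * I) - 1 - x * I‖ ≤ |x| * ‖x - (0:ℝ)‖ := key
    _ = x ^ 2 := by rw [sub_zero, Real.norm_eq_abs, ← abs_mul, ← sq, abs_of_nonneg (sq_nonneg x)]

lemma g_norm_le (ξ v : ℝ) :
    ‖Complex.exp (-(I * ξ * v)) - 1 + I * ξ * v‖ ≤ ξ ^ 2 * v ^ 2 := by
  have h := norm_exp_taylor (-(ξ * v))
  have he : Complex.exp (((-(ξ * v) : ℝ) : ℂ) * I) - 1 - ((-(ξ * v) : ℝ) : ℂ) * I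
      = Complex.exp (-(I * ξ * v)) - 1 + I * ξ * v := by
    push_cast; ring_nf
  rw [he] at h
  calc ‖Complex.exp (-(I * ξ * v)) - 1 + I * ξ * v‖ ≤ (-(ξ * v)) ^ 2 := h
    _ = ξ ^ 2 * v ^ 2 := by ring

lemma integrable_g (μ : Measure ℝ) [IsProbabilityMeasure μ]
    (hμ2 : Integrable (fun v : ℝ => v ^ 2) μ) (ξ : ℝ) :
    Integrable (fun v : ℝ => Complex.exp (-(I * ξ * v)) - 1 + I * ξ * v) μ := by
  have hcont : Continuous fun v : ℝ => Complex.exp (-(I * ξ * v)) - 1 + I * ξ * v := by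
    continuity
  refine ((hμ2.const_mul (ξ ^ 2)).mono' hcont.aestronglyMeasurable ?_)
  filter_upwards with v using g_norm_le ξ v

lemma integrable_id' (μ : Measure ℝ) [IsProbabilityMeasure μ]
    (hμ2 : Integrable (fun v : ℝ => v ^ 2) μ) : Integrable (fun v : ℝ => v) μ := by
  refine ((integrable_const (1:ℝ)).add hμ2).mono' aestronglyMeasurable_id ?_
  filter_upwards with v
  simp only [Real.norm_eq_abs, Pi.add_apply]
  nlinarith [sq_nonneg (|v| - 1), sq_abs v, abs_nonneg v]

lemma integrable_exp' (μ : Measure ℝ) [IsProbabilityMeasure μ] (ξ : ℝ) :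
    Integrable (fun v : ℝ => Complex.exp (-(I * ξ * v))) μ := by
  refine (integrable_const (1:ℝ)).mono' ?_ ?_
  · exact (Continuous.cexp (by continuity)).aestronglyMeasurable
  · filter_upwards with v
    have : -(I * ξ * v) = ((-(ξ * v) : ℝ) : ℂ) * I := by push_cast; ring
    rw [this, Complex.norm_exp_ofReal_mul_I]

lemma integral_g (μ : Measure ℝ) [IsProbabilityMeasure μ]
    (hμ2 : Integrable (fun v : ℝ => v ^ 2) μ) (ξ : ℝ) :
    ∫ v, (Complex.exp (-(I * ξ * v)) - 1 + I * ξ * v) ∂μ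
      = fourierTr μ ξ - 1 + I * ξ * ((∫ v, v ∂μ : ℝ) : ℂ) := by
  have hlin : Integrable (fun v : ℝ => I * ξ * (v : ℂ)) μ := by
    simpa [mul_assoc] using ((integrable_id' μ hμ2).ofReal (𝕜 := ℂ)).const_mul (I * ξ)
  have hA := integral_add ((integrable_exp' μ ξ).sub (integrable_const (1:ℂ))) hlin
  have hS := integral_sub (integrable_exp' μ ξ) (integrable_const (1:ℂ))
  simp only [Pi.sub_apply, Pi.add_apply] at hA hS
  rw [hA, hS, integral_const]
  simp only [probReal_univ, one_smul]
  have : ∫ v, I * ↑ξ * (v : ℂ) ∂μ = I * ξ * ((∫ v, v ∂μ : ℝ) : ℂ) := by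
    rw [integral_const_mul]
    congr 1
    have : ∀ a : ℝ, ((a : ℂ)) = RCLike.ofReal (K := ℂ) a := fun a => rfl
    simp_rw [this]
    exact integral_ofReal
  rw [this, fourierTr]


/-- For probability measures `μ, ν` on `ℝ` with finite second moments and equal
first moments, the 2-Fourier metric `d₂(μ, ν) = sup_{ξ ≠ 0} |ν̂(ξ) − μ̂(ξ)|/ξ²` is finite,
i.e. the set of values `|ν̂(ξ) − μ̂(ξ)|/ξ²` is bounded above. -/
theorem d2_finite (μ ν : Measure ℝ)
    [IsProbabilityMeasure μ] [IsProbabilityMeasure ν]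
    (hμ2 : Integrable (fun v : ℝ => v ^ 2) μ)
    (hν2 : Integrable (fun v : ℝ => v ^ 2) ν)
    (hmean : ∫ v, v ∂μ = ∫ v, v ∂ν) :
    BddAbove (d2Set μ ν) := by
  set C : ℝ := (∫ v, v ^ 2 ∂ν) + (∫ v, v ^ 2 ∂μ) with hC
  refine ⟨C, ?_⟩
  rintro r ⟨ξ, hξ, rfl⟩
  have hdiff : fourierTr ν ξ - fourierTr μ ξ
      = (∫ v, (Complex.exp (-(I * ξ * v)) - 1 + I * ξ * v) ∂ν)
        - (∫ v, (Complex.exp (-(I * ξ * v)) - 1 + I * ξ * v) ∂μ) := by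
    rw [integral_g ν hν2 ξ, integral_g μ hμ2 ξ, hmean]; ring
  have hb : ∀ (m : Measure ℝ) [IsProbabilityMeasure m],
      Integrable (fun v : ℝ => v ^ 2) m →
      ‖∫ v, (Complex.exp (-(I * ξ * v)) - 1 + I * ξ * v) ∂m‖ ≤ ξ ^ 2 * ∫ v, v ^ 2 ∂m := by
    intro m _ hm2
    refine (norm_integral_le_integral_norm _).trans ?_
    rw [← integral_const_mul]
    refine integral_mono (integrable_g m hm2 ξ).norm (hm2.const_mul _) ?_
    intro v; exact g_norm_le ξ v
  have hnorm : ‖fourierTr ν ξ - fourierTr μ ξ‖ ≤ ξ ^ 2 * C := by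
    rw [hdiff]
    refine (norm_sub_le _ _).trans ?_
    have := hb ν hν2
    have := hb μ hμ2
    rw [hC]; linarith
  have hξ2 : (0:ℝ) < ξ ^ 2 := by positivity
  rw [div_le_iff₀ hξ2]
  linarith [hnorm]
end

section
/- Let f ∈ L¹(ℝ) with f ≥ 0 and set ρ = ∫_ℝ f(v) dv and f̂(ξ) = ∫_ℝ e^{−iξv} f(v) dv. Then Q(f,f) ∈ L¹(ℝ) and for every ξ ∈ ℝ one has the Bobylev identity ∫_ℝ e^{−iξv} Q(f,f)(v) dv = f̂(pξ) f̂(qξ) − ρ f̂(ξ). In particular, if f is a probability density (ρ = 1), then ∫_ℝ e^{−iξv} Q(f,f)(v) dv = f̂(pξ) f̂(qξ) − f̂(ξ). -/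
open MeasureTheory

/-- The inverse interaction `'v = (p v − q v_*)/(p² − q²)`; by symmetry,
`'v_* = preTrait p q v_* v`. -/
noncomputable def preTrait (p q v vs : ℝ) : ℝ := (p * v - q * vs) / (p ^ 2 - q ^ 2)

/-- The Maxwellian Boltzmann-type collision operator
`Q(f,f)(v) = ∫ ( (1/|p² − q²|) f('v) f('v_*) − f(v) f(v_*) ) dv_*`. -/
noncomputable def collOp (p q : ℝ) (f : ℝ → ℝ) (v : ℝ) : ℝ :=
  ∫ vs, ((1 / |p ^ 2 - q ^ 2|) * f (preTrait p q v vs) * f (preTrait p q vs v)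
    - f v * f vs)

/-- The Fourier transform `f̂(ξ) = ∫ e^{−iξv} f(v) dv` of `f : ℝ → ℝ`. -/
noncomputable def fourierTrFn (f : ℝ → ℝ) (ξ : ℝ) : ℂ :=
  ∫ v : ℝ, Complex.exp (-(Complex.I * ξ * v)) * (f v : ℂ)

/-- The inverse-interaction map as a linear map on `ℝ × ℝ`. -/
noncomputable def Smap (p q : ℝ) : (ℝ × ℝ) →ₗ[ℝ] (ℝ × ℝ) where
  toFun z := ((p * z.1 - q * z.2) / (p ^ 2 - q ^ 2), (p * z.2 - q * z.1) / (p ^ 2 - q ^ 2))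
  map_add' x y := by
    simp only [Prod.fst_add, Prod.snd_add, Prod.mk_add_mk, Prod.mk.injEq]
    constructor <;> ring
  map_smul' c x := by
    simp only [Prod.smul_fst, Prod.smul_snd, smul_eq_mul, Prod.smul_mk, RingHom.id_apply,
      Prod.mk.injEq]
    constructor <;> ring

lemma Smap_det (p q : ℝ) (hD : p ^ 2 - q ^ 2 ≠ 0) :
    LinearMap.det (Smap p q) = (p ^ 2 - q ^ 2)⁻¹ := by
  rw [← LinearMap.det_toMatrix (Module.Basis.finTwoProd ℝ), Matrix.det_fin_two]
  simp only [LinearMap.toMatrix_apply, Smap, Module.Basis.finTwoProd_zero, Module.Basis.finTwoProd_one, Module.Basis.coe_finTwoProd_repr, Matrix.cons_val_zero, Matrix.cons_val_one, LinearMap.coe_mk, AddHom.coe_mk]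
  field_simp
  ring_nf

lemma Smap_fst (p q : ℝ) (hD : p ^ 2 - q ^ 2 ≠ 0) (z : ℝ × ℝ) :
    p * (Smap p q z).1 + q * (Smap p q z).2 = z.1 := by
  simp only [Smap, LinearMap.coe_mk, AddHom.coe_mk]
  field_simp
  ring

lemma Smap_map_volume (p q : ℝ) (hD : p ^ 2 - q ^ 2 ≠ 0) :
    Measure.map (Smap p q) (volume : Measure (ℝ × ℝ)) =
      ENNReal.ofReal |p ^ 2 - q ^ 2| • volume := by
  rw [Measure.map_linearMap_addHaar_eq_smul_addHaar volume
    (by rw [Smap_det p q hD]; exact inv_ne_zero hD), Smap_det p q hD, inv_inv]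

lemma integrable_comp_Smap {E : Type*} [NormedAddCommGroup E] (p q : ℝ)
    (hD : p ^ 2 - q ^ 2 ≠ 0) (H : ℝ × ℝ → E) (hH : Integrable H) :
    Integrable (fun z => H (Smap p q z)) := by
  have hS : Measurable (Smap p q) := (Smap p q).continuous_of_finiteDimensional.measurable
  have h1 : Integrable H (Measure.map (Smap p q) volume) := by
    rw [Smap_map_volume p q hD]
    exact hH.smul_measure ENNReal.ofReal_ne_top
  exact (integrable_map_measure h1.aestronglyMeasurable hS.aemeasurable).mp h1

lemma integral_comp_Smap {E : Type*} [NormedAddCommGroup E] [NormedSpace ℝ E] (p q : ℝ)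
    (hD : p ^ 2 - q ^ 2 ≠ 0) (H : ℝ × ℝ → E) (hH : AEStronglyMeasurable H volume) :
    ∫ z, H (Smap p q z) = |p ^ 2 - q ^ 2| • ∫ z, H z := by
  have hS : Measurable (Smap p q) := (Smap p q).continuous_of_finiteDimensional.measurable
  have hH' : AEStronglyMeasurable H (Measure.map (Smap p q) volume) := by
    rw [Smap_map_volume p q hD]
    exact hH.mono_ac Measure.smul_absolutelyContinuous
  rw [← integral_map hS.aemeasurable hH', Smap_map_volume p q hD, integral_smul_measure,
    ENNReal.toReal_ofReal (abs_nonneg _)]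

/-- For `f ∈ L¹(ℝ)`, `f ≥ 0`, the collision operator `Q(f,f)` is in `L¹(ℝ)` and
its Fourier transform obeys the Bobylev identity
`∫ e^{−iξv} Q(f,f)(v) dv = f̂(pξ) f̂(qξ) − ρ f̂(ξ)`, `ρ = ∫ f`;
in particular `∫ e^{−iξv} Q(f,f)(v) dv = f̂(pξ) f̂(qξ) − f̂(ξ)` when `ρ = 1`. -/
theorem bobylev_identity (p q : ℝ) (hp : 0 ≤ p) (hq : 0 ≤ q) (hpq : p ≠ q)
    (f : ℝ → ℝ) (hf : Integrable f) (hf_nonneg : ∀ v, 0 ≤ f v) :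
    Integrable (collOp p q f) ∧
    (∀ ξ : ℝ,
      fourierTrFn (collOp p q f) ξ =
        fourierTrFn f (p * ξ) * fourierTrFn f (q * ξ)
          - ((∫ v, f v : ℝ) : ℂ) * fourierTrFn f ξ) ∧
    ((∫ v, f v) = 1 →
      ∀ ξ : ℝ,
        fourierTrFn (collOp p q f) ξ =
          fourierTrFn f (p * ξ) * fourierTrFn f (q * ξ) - fourierTrFn f ξ) := by
  have hD : p ^ 2 - q ^ 2 ≠ 0 := by
    have h1 : p - q ≠ 0 := sub_ne_zero.mpr hpq
    have h2 : p + q ≠ 0 := by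
      intro h
      have hp0 : p = 0 := le_antisymm (by linarith) hp
      have hq0 : q = 0 := le_antisymm (by linarith) hq
      exact hpq (hp0.trans hq0.symm)
    have : p ^ 2 - q ^ 2 = (p - q) * (p + q) := by ring
    rw [this]
    exact mul_ne_zero h1 h2
  set c : ℝ := |p ^ 2 - q ^ 2| with hc_def
  have hc : c ≠ 0 := abs_ne_zero.mpr hD
  -- the 2D product function and its composition with the inverse interaction
  set G : ℝ × ℝ → ℝ := fun z => f z.1 * f z.2 with hG_def
  have hG : Integrable G := by
    rw [Measure.volume_eq_prod]; exact hf.mul_prod hf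
  have hGS : Integrable (fun z : ℝ × ℝ => G (Smap p q z)) :=
    integrable_comp_Smap p q hD G hG
  -- the 2D integrand of the collision operator
  set K : ℝ × ℝ → ℝ := fun z =>
    (1 / c) * f (preTrait p q z.1 z.2) * f (preTrait p q z.2 z.1) - f z.1 * f z.2 with hK_def
  have hKeq : ∀ z : ℝ × ℝ, K z = (1 / c) * G (Smap p q z) - G z := by
    intro z
    simp only [hK_def, hG_def, Smap, LinearMap.coe_mk, AddHom.coe_mk, preTrait]
    ring
  have hK : Integrable K := by
    have : Integrable (fun z : ℝ × ℝ => (1 / c) * G (Smap p q z) - G z) :=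
      (hGS.const_mul (1 / c)).sub hG
    exact this.congr (Filter.Eventually.of_forall fun z => (hKeq z).symm)
  have hcoll : collOp p q f = fun v => ∫ vs, K (v, vs) := rfl
  have hKprod : Integrable K (volume.prod volume) := by rwa [← Measure.volume_eq_prod]
  constructor
  · rw [hcoll]
    exact hKprod.integral_prod_left
  have main : ∀ ξ : ℝ,
      fourierTrFn (collOp p q f) ξ =
        fourierTrFn f (p * ξ) * fourierTrFn f (q * ξ)
          - ((∫ v, f v : ℝ) : ℂ) * fourierTrFn f ξ := by
    intro ξ
    set E : ℝ → ℂ := fun v => Complex.exp (-(Complex.I * ξ * v)) with hE_def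
    have hEnorm : ∀ v : ℝ, ‖E v‖ = 1 := by
      intro v
      simp only [hE_def, Complex.norm_exp]
      norm_num
    have hEcont : Continuous E := by
      rw [hE_def]
      exact Complex.continuous_exp.comp ((continuous_const.mul Complex.continuous_ofReal).neg)
    have hEm : AEStronglyMeasurable (fun z : ℝ × ℝ => E z.1) volume :=
      (hEcont.comp continuous_fst).aestronglyMeasurable
    -- the complex 2D integrand
    set HK : ℝ × ℝ → ℂ := fun z => E z.1 * (K z : ℂ) with hHK_def
    have hHK : Integrable HK (volume.prod volume) := by
      rw [← Measure.volume_eq_prod]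
      apply Integrable.bdd_mul hK.ofReal
      · exact hEm
      · exact Filter.Eventually.of_forall (fun z => le_of_eq (hEnorm z.1))
    have hpt : ∀ v : ℝ, E v * ((∫ vs, K (v, vs) : ℝ) : ℂ) = ∫ vs, HK (v, vs) := by
      intro v
      have h1 : ∀ vs : ℝ, HK (v, vs) = K (v, vs) • E v := by
        intro vs
        simp only [hHK_def]
        rw [Complex.real_smul, mul_comm]
      rw [integral_congr_ae (Filter.Eventually.of_forall h1), integral_smul_const,
        Complex.real_smul, mul_comm]
    have step1 : fourierTrFn (collOp p q f) ξ = ∫ z : ℝ × ℝ, HK z := by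
      have h0 : fourierTrFn (collOp p q f) ξ = ∫ v, E v * ((collOp p q f v : ℝ) : ℂ) := by
        unfold fourierTrFn
        rw [hE_def]
      have hA : ∫ (v : ℝ), ∫ (vs : ℝ), HK (v, vs) = ∫ z : ℝ × ℝ, HK z := by
        rw [Measure.volume_eq_prod]
        exact integral_integral hHK
      rw [h0, hcoll, ← hA]
      exact integral_congr_ae (Filter.Eventually.of_forall fun v => hpt v)
    -- split gain and loss
    set gP : ℝ × ℝ → ℝ := fun z => 1 / c * G (Smap p q z) with hgP_def
    have hgP : Integrable gP := hGS.const_mul (1 / c)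
    have hgainC : Integrable (fun z : ℝ × ℝ => E z.1 * ((gP z : ℝ) : ℂ)) := by
      apply Integrable.bdd_mul hgP.ofReal
      · exact hEm
      · exact Filter.Eventually.of_forall (fun z => le_of_eq (hEnorm z.1))
    have hlossC : Integrable (fun z : ℝ × ℝ => E z.1 * ((G z : ℝ) : ℂ)) := by
      apply Integrable.bdd_mul hG.ofReal
      · exact hEm
      · exact Filter.Eventually.of_forall (fun z => le_of_eq (hEnorm z.1))
    have step2 : ∫ z : ℝ × ℝ, HK z =
        (∫ z : ℝ × ℝ, E z.1 * ((gP z : ℝ) : ℂ))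
          - ∫ z : ℝ × ℝ, E z.1 * ((G z : ℝ) : ℂ) := by
      rw [← integral_sub hgainC hlossC]
      apply integral_congr_ae
      apply Filter.Eventually.of_forall
      intro z
      simp only [hHK_def, hKeq z, hgP_def]
      push_cast
      ring
    -- loss term
    have hloss : ∫ z : ℝ × ℝ, E z.1 * ((G z : ℝ) : ℂ)
        = ((∫ v, f v : ℝ) : ℂ) * fourierTrFn f ξ := by
      have h1 : ∀ z : ℝ × ℝ, E z.1 * ((G z : ℝ) : ℂ) = (E z.1 * (f z.1 : ℂ)) * ((f z.2 : ℂ)) := by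
        intro z; simp only [hG_def]; push_cast; ring
      have h2 : (∫ w : ℝ, ((f w : ℝ) : ℂ)) = ((∫ w, f w : ℝ) : ℂ) := integral_ofReal
      have h4 : ∫ a : ℝ × ℝ, (E a.1 * ((f a.1 : ℝ) : ℂ)) * ((f a.2 : ℝ) : ℂ) ∂(volume.prod volume)
          = (∫ v, E v * ((f v : ℝ) : ℂ)) * ∫ w, ((f w : ℝ) : ℂ) :=
        integral_prod_mul (fun v => E v * ((f v : ℝ) : ℂ)) (fun w => ((f w : ℝ) : ℂ))
      rw [integral_congr_ae (Filter.Eventually.of_forall h1), Measure.volume_eq_prod, h4, h2,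
        mul_comm]
      unfold fourierTrFn
      rw [hE_def]
    -- gain term
    have hgain : ∫ z : ℝ × ℝ, E z.1 * ((gP z : ℝ) : ℂ) =
        fourierTrFn f (p * ξ) * fourierTrFn f (q * ξ) := by
      set H : ℝ × ℝ → ℂ := fun z =>
        Complex.exp (-(Complex.I * ξ * (p * z.1 + q * z.2))) * (((1 / c) * G z : ℝ) : ℂ)
        with hH_def
      have hcomp : ∀ z : ℝ × ℝ, E z.1 * ((gP z : ℝ) : ℂ) = H (Smap p q z) := by
        intro z
        simp only [hH_def, hE_def, hgP_def]
        rw [show ((p : ℂ) * ((Smap p q z).1 : ℝ) + (q : ℂ) * ((Smap p q z).2 : ℝ))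
            = (((p * (Smap p q z).1 + q * (Smap p q z).2 : ℝ)) : ℂ) by push_cast; ring,
          Smap_fst p q hD z]
      have hHm : AEStronglyMeasurable H volume := by
        apply AEStronglyMeasurable.mul
        · apply Continuous.aestronglyMeasurable
          fun_prop
        · exact Complex.continuous_ofReal.comp_aestronglyMeasurable
            ((hG.const_mul (1 / c)).aestronglyMeasurable)
      rw [integral_congr_ae (Filter.Eventually.of_forall hcomp),
        integral_comp_Smap p q hD H hHm]
      have hH2 : ∀ z : ℝ × ℝ, H z =
          (Complex.exp (-(Complex.I * ((p : ℂ) * (ξ : ℂ)) * z.1)) * (f z.1 : ℂ)) *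
          (((1 / c : ℝ) : ℂ) * (Complex.exp (-(Complex.I * ((q : ℂ) * (ξ : ℂ)) * z.2)) * (f z.2 : ℂ))) := by
        intro z
        simp only [hH_def, hG_def]
        rw [show (-(Complex.I * ξ * (p * z.1 + q * z.2))) =
          (-(Complex.I * ((p : ℂ) * (ξ : ℂ)) * z.1)) + (-(Complex.I * ((q : ℂ) * (ξ : ℂ)) * z.2))
          by push_cast; ring, Complex.exp_add]
        push_cast
        ring
      have h5 : ∫ a : ℝ × ℝ,
            (Complex.exp (-(Complex.I * ((p : ℂ) * (ξ : ℂ)) * a.1)) * (f a.1 : ℂ)) *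
            (((1 / c : ℝ) : ℂ) * (Complex.exp (-(Complex.I * ((q : ℂ) * (ξ : ℂ)) * a.2)) * (f a.2 : ℂ)))
            ∂(volume.prod volume)
          = (∫ v : ℝ, Complex.exp (-(Complex.I * ((p : ℂ) * (ξ : ℂ)) * v)) * (f v : ℂ)) *
            ∫ w : ℝ, ((1 / c : ℝ) : ℂ) * (Complex.exp (-(Complex.I * ((q : ℂ) * (ξ : ℂ)) * w)) * (f w : ℂ)) :=
        integral_prod_mul
          (fun v : ℝ => Complex.exp (-(Complex.I * ((p : ℂ) * (ξ : ℂ)) * v)) * (f v : ℂ))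
          (fun w : ℝ => ((1 / c : ℝ) : ℂ) *
            (Complex.exp (-(Complex.I * ((q : ℂ) * (ξ : ℂ)) * w)) * (f w : ℂ)))
      rw [integral_congr_ae (Filter.Eventually.of_forall hH2), Measure.volume_eq_prod, h5,
        integral_const_mul]
      unfold fourierTrFn
      simp only [Complex.ofReal_mul]
      rw [← hc_def, Complex.real_smul]
      have hcC : (c : ℂ) ≠ 0 := Complex.ofReal_ne_zero.mpr hc
      push_cast
      field_simp
    rw [step1, step2, hloss, hgain]
  refine ⟨main, fun hρ ξ => ?_⟩
  rw [main ξ, hρ]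
  simp
end

section
/- Let f ∈ L¹(ℝ) with f ≥ 0, let B : ℝ² → [0, ∞) be bounded and measurable, and let φ : ℝ → ℝ be bounded and measurable. Then the weak-form identity holds: ∫_ℝ φ(v) ∫_ℝ ( (B('v,'v_*)/|p² − q²|) f('v) f('v_*) − B(v, v_*) f(v) f(v_*) ) dv_* dv = ∫_ℝ ∫_ℝ B(v, v_*) ( φ(p v + q v_*) − φ(v) ) f(v) f(v_*) dv dv_*, where 'v, 'v_* are the inverse interactions evaluated at (v, v_*). -/
open MeasureTheory

/-- The inverse interaction as a linear map on `ℝ × ℝ`. -/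
noncomputable def preTraitMap (p q : ℝ) : (ℝ × ℝ) →ₗ[ℝ] (ℝ × ℝ) where
  toFun z := (preTrait p q z.1 z.2, preTrait p q z.2 z.1)
  map_add' x y := by unfold preTrait; ext <;> simp <;> ring
  map_smul' c x := by unfold preTrait; ext <;> simp <;> ring

lemma preTraitMap_det (p q : ℝ) (h : p ^ 2 - q ^ 2 ≠ 0) :
    LinearMap.det (preTraitMap p q) = (p ^ 2 - q ^ 2)⁻¹ := by
  rw [← LinearMap.det_toMatrix (Module.Basis.finTwoProd ℝ), Matrix.det_fin_two]
  simp only [LinearMap.toMatrix_apply, preTraitMap, LinearMap.coe_mk, AddHom.coe_mk,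
    Module.Basis.finTwoProd_zero, Module.Basis.finTwoProd_one, Module.Basis.coe_finTwoProd_repr, preTrait]
  norm_num
  field_simp

/-- A bounded measurable function times an integrable product is integrable. -/
lemma aux_integrable (f : ℝ → ℝ) (hf : Integrable f) (g : ℝ × ℝ → ℝ)
    (hg : AEStronglyMeasurable g (volume : Measure (ℝ × ℝ))) (C : ℝ) (hgC : ∀ z, |g z| ≤ C) :
    Integrable (fun z : ℝ × ℝ => g z * (f z.1 * f z.2)) := by
  have h1 : Integrable (fun z : ℝ × ℝ => f z.1 * f z.2) := by
    rw [Measure.volume_eq_prod]; exact hf.mul_prod hf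
  exact h1.bdd_mul (c := C) hg (Filter.Eventually.of_forall fun z => by simpa [Real.norm_eq_abs] using hgC z)

/-- weak form of the Boltzmann-type collision operator with interaction kernel `B`:
for `f ∈ L¹(ℝ)`, `f ≥ 0`, `B` bounded measurable and `φ` a bounded measurable observable,
`∫ φ(v) ∫ ( B('v,'v_*)/|p²−q²| f('v) f('v_*) − B(v,v_*) f(v) f(v_*) ) dv_* dv
  = ∫∫ B(v,v_*) (φ(pv + qv_*) − φ(v)) f(v) f(v_*) dv dv_*`. -/
theorem weak_form_identity (p q : ℝ) (hp : 0 ≤ p) (hq : 0 ≤ q) (hpq : p ≠ q)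
    (f : ℝ → ℝ) (hf : Integrable f) (hf_nonneg : ∀ v, 0 ≤ f v)
    (B : ℝ → ℝ → ℝ) (hB_meas : Measurable (Function.uncurry B))
    (hB_nonneg : ∀ v vs, 0 ≤ B v vs) (hB_bdd : ∃ C, ∀ v vs, B v vs ≤ C)
    (φ : ℝ → ℝ) (hφ_meas : Measurable φ) (hφ_bdd : ∃ C, ∀ v, |φ v| ≤ C) :
    ∫ v, φ v * ∫ vs,
        ((B (preTrait p q v vs) (preTrait p q vs v) / |p ^ 2 - q ^ 2|)
            * f (preTrait p q v vs) * f (preTrait p q vs v)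
          - B v vs * f v * f vs) =
      ∫ v, ∫ vs, B v vs * (φ (p * v + q * vs) - φ v) * f v * f vs := by
  obtain ⟨Cφ, hCφ⟩ := hφ_bdd
  obtain ⟨CB, hCB⟩ := hB_bdd
  have hΔ : p ^ 2 - q ^ 2 ≠ 0 := by
    have h1 : p - q ≠ 0 := sub_ne_zero.mpr hpq
    have h2 : p + q ≠ 0 := by
      intro h
      have : p = 0 ∧ q = 0 := by constructor <;> linarith
      exact hpq (this.1.trans this.2.symm)
    have : p ^ 2 - q ^ 2 = (p - q) * (p + q) := by ring
    rw [this]; exact mul_ne_zero h1 h2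
  set Δ : ℝ := p ^ 2 - q ^ 2 with hΔdef
  have habs : |Δ| ≠ 0 := abs_ne_zero.mpr hΔ
  set S : (ℝ × ℝ) →ₗ[ℝ] (ℝ × ℝ) := preTraitMap p q with hSdef
  have hSz : ∀ z : ℝ × ℝ, S z = (preTrait p q z.1 z.2, preTrait p q z.2 z.1) := fun z => rfl
  have hSdet : LinearMap.det S = Δ⁻¹ := preTraitMap_det p q hΔ
  have hSmeas : Measurable S := S.continuous_of_finiteDimensional.measurable
  have hmap : Measure.map S (volume : Measure (ℝ × ℝ)) = ENNReal.ofReal |Δ| • volume := by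
    rw [Measure.map_linearMap_addHaar_eq_smul_addHaar _
      (by rw [hSdet]; exact inv_ne_zero hΔ), hSdet]
    simp [abs_inv]
  -- back substitution identity
  have hback : ∀ v vs : ℝ, p * preTrait p q v vs + q * preTrait p q vs v = v := by
    intro v vs
    unfold preTrait
    rw [← hΔdef]
    field_simp
    ring
  -- the two basic integrands
  set F1 : ℝ × ℝ → ℝ := fun z => (φ z.1 * B z.1 z.2) * (f z.1 * f z.2) with hF1def
  set F2 : ℝ × ℝ → ℝ := fun z => (φ (p * z.1 + q * z.2) * B z.1 z.2) * (f z.1 * f z.2)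
    with hF2def
  have hCφ0 : 0 ≤ Cφ := le_trans (abs_nonneg _) (hCφ 0)
  have hBabs : ∀ v vs, |B v vs| ≤ CB := by
    intro v vs; rw [abs_of_nonneg (hB_nonneg v vs)]; exact hCB v vs
  have hF1int : Integrable F1 := by
    apply aux_integrable f hf _ ?_ (Cφ * CB)
    · intro z
      rw [abs_mul]
      exact mul_le_mul (hCφ _) (hBabs _ _) (abs_nonneg _) hCφ0
    · exact ((hφ_meas.comp measurable_fst).mul hB_meas).aestronglyMeasurable
  have hF2int : Integrable F2 := by
    apply aux_integrable f hf _ ?_ (Cφ * CB)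
    · intro z
      rw [abs_mul]
      exact mul_le_mul (hCφ _) (hBabs _ _) (abs_nonneg _) hCφ0
    · exact ((hφ_meas.comp (by fun_prop)).mul hB_meas).aestronglyMeasurable
  -- integrability and integral of F2 ∘ S
  have hF2sm : AEStronglyMeasurable F2 (Measure.map S volume) := by
    rw [hmap]
    exact hF2int.aestronglyMeasurable.smul_measure _
  have hF2S : Integrable (fun z => F2 (S z)) := by
    have : Integrable F2 (Measure.map S volume) := by
      rw [hmap]
      exact hF2int.smul_measure ENNReal.ofReal_ne_top
    exact (integrable_map_measure hF2sm hSmeas.aemeasurable).mp this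
  have hF2Sint : ∫ z, F2 (S z) = |Δ| * ∫ z, F2 z := by
    rw [← integral_map hSmeas.aemeasurable hF2sm, hmap, integral_smul_measure,
      ENNReal.toReal_ofReal (abs_nonneg _), smul_eq_mul]
  -- rewrite the LHS integrand
  have hLHS1 : (fun v => φ v * ∫ vs,
        ((B (preTrait p q v vs) (preTrait p q vs v) / |Δ|)
            * f (preTrait p q v vs) * f (preTrait p q vs v)
          - B v vs * f v * f vs)) =
      fun v => ∫ vs, (|Δ|⁻¹ * F2 (S (v, vs)) - F1 (v, vs)) := by
    funext v
    rw [← integral_const_mul]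
    congr 1
    funext vs
    rw [hSz, hF2def, hF1def]
    simp only
    rw [hback v vs]
    field_simp
  rw [hLHS1]
  have hH : Integrable (fun z : ℝ × ℝ => |Δ|⁻¹ * F2 (S z) - F1 z) :=
    (hF2S.const_mul _).sub hF1int
  have hG : Integrable (fun z : ℝ × ℝ => F2 z - F1 z) := hF2int.sub hF1int
  rw [Measure.volume_eq_prod] at hH hG hF1int hF2int hF2S hF2Sint
  have e1 : ∫ v, ∫ vs, (|Δ|⁻¹ * F2 (S (v, vs)) - F1 (v, vs)) =
      ∫ z : ℝ × ℝ, (|Δ|⁻¹ * F2 (S z) - F1 z) ∂((volume : Measure ℝ).prod volume) := by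
    exact integral_integral hH
  have e2 : ∫ v, ∫ vs, B v vs * (φ (p * v + q * vs) - φ v) * f v * f vs =
      ∫ z : ℝ × ℝ, (F2 z - F1 z) ∂((volume : Measure ℝ).prod volume) := by
    rw [show (fun v => ∫ vs, B v vs * (φ (p * v + q * vs) - φ v) * f v * f vs) =
        fun v => ∫ vs, (F2 (v, vs) - F1 (v, vs)) from funext fun v => by
      congr 1; funext vs; rw [hF2def, hF1def]; simp only; ring]
    exact integral_integral hG
  rw [e1, e2, integral_sub (hF2S.const_mul _) hF1int, integral_sub hF2int hF1int,
    integral_const_mul, hF2Sint]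
  congr 1
  rw [← mul_assoc, inv_mul_cancel₀ habs, one_mul]
end

section
/- Suppose f₁, …, f_N : ℝ × [0, ∞) → [0, ∞) are such that f_i(·, t) ∈ L¹(ℝ) for every t, t ↦ f_i(v, t) is differentiable, the f_i satisfy pointwise the networked kinetic system ∂_t f_i(v,t) = λ Q(f_i, f_i)(v,t) + χ( Σ_{j=1}^N a_{ij} f_j(v,t) − f_i(v,t) ), and the family { ∂_t f_i(·, t) } is dominated by a fixed integrable function on compact time intervals (so that differentiation under the integral sign is legitimate). Then the masses ρ_i(t) = ∫_ℝ f_i(v, t) dv are differentiable and satisfy ρ_i'(t) = χ( Σ_{j=1}^N a_{ij} ρ_j(t) − ρ_i(t) ) for every i = 1, …, N. -/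
open MeasureTheory

/-- The pre-collision map as a linear map on `ℝ × ℝ`. -/
noncomputable def Lmap (p q : ℝ) : (ℝ × ℝ) →ₗ[ℝ] (ℝ × ℝ) where
  toFun z := (preTrait p q z.1 z.2, preTrait p q z.2 z.1)
  map_add' x y := by
    simp only [preTrait, Prod.fst_add, Prod.snd_add, Prod.mk_add_mk, Prod.mk.injEq]
    constructor <;> ring
  map_smul' m x := by
    simp only [preTrait, Prod.smul_fst, Prod.smul_snd, RingHom.id_apply,
      Prod.smul_mk, smul_eq_mul, Prod.mk.injEq]
    constructor <;> ring

lemma det_Lmap (p q : ℝ) (hc : p ^ 2 - q ^ 2 ≠ 0) :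
    LinearMap.det (Lmap p q) = (p ^ 2 - q ^ 2)⁻¹ := by
  rw [← LinearMap.det_toMatrix (Module.Basis.finTwoProd ℝ), Matrix.det_fin_two]
  simp only [LinearMap.toMatrix_apply, Module.Basis.finTwoProd_zero, Module.Basis.finTwoProd_one,
    Module.Basis.coe_finTwoProd_repr, Lmap, LinearMap.coe_mk, AddHom.coe_mk, preTrait]
  norm_num [Matrix.cons_val_zero, Matrix.cons_val_one, Matrix.head_cons]
  field_simp

lemma collOp_key (p q : ℝ) (hc : p ^ 2 - q ^ 2 ≠ 0) (h : ℝ → ℝ) (hh : Integrable h) :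
    Integrable (collOp p q h) ∧ ∫ v, collOp p q h v = 0 := by
  have habs : |p ^ 2 - q ^ 2| ≠ 0 := abs_ne_zero.2 hc
  have hdet : LinearMap.det (Lmap p q) ≠ 0 := by
    rw [det_Lmap p q hc]; exact inv_ne_zero hc
  have hmap : Measure.map (Lmap p q) (volume : Measure (ℝ × ℝ))
      = ENNReal.ofReal |p ^ 2 - q ^ 2| • volume := by
    rw [Measure.map_linearMap_addHaar_eq_smul_addHaar volume hdet, det_Lmap p q hc, inv_inv]
  have hL : Measurable (Lmap p q) := (Lmap p q).continuous_of_finiteDimensional.measurable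
  have hH : Integrable (fun z : ℝ × ℝ => h z.1 * h z.2) := hh.mul_prod hh
  have hHsm : Integrable (fun z : ℝ × ℝ => h z.1 * h z.2)
      (ENNReal.ofReal |p ^ 2 - q ^ 2| • volume) := hH.smul_measure ENNReal.ofReal_ne_top
  have hHmap : Integrable (fun z : ℝ × ℝ => h z.1 * h z.2)
      (Measure.map (Lmap p q) volume) := by rw [hmap]; exact hHsm
  have hHL : Integrable (fun z : ℝ × ℝ => h (preTrait p q z.1 z.2) * h (preTrait p q z.2 z.1)) :=
    (integrable_map_measure hHmap.aestronglyMeasurable hL.aemeasurable).1 hHmap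
  have hIprod : ∫ z : ℝ × ℝ, h z.1 * h z.2 = (∫ v, h v) * (∫ v, h v) := integral_prod_mul h h
  have hval : ∫ z : ℝ × ℝ, h (preTrait p q z.1 z.2) * h (preTrait p q z.2 z.1)
      = |p ^ 2 - q ^ 2| * ((∫ v, h v) * (∫ v, h v)) := by
    have h1 : ∫ z : ℝ × ℝ, h (preTrait p q z.1 z.2) * h (preTrait p q z.2 z.1)
        = ∫ w : ℝ × ℝ, h w.1 * h w.2 ∂(Measure.map (Lmap p q) volume) :=
      (integral_map hL.aemeasurable hHmap.aestronglyMeasurable).symm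
    rw [h1, hmap, integral_smul_measure, ENNReal.toReal_ofReal (abs_nonneg _), hIprod, smul_eq_mul]
  set G : ℝ × ℝ → ℝ := fun z =>
    (1 / |p ^ 2 - q ^ 2|) * h (preTrait p q z.1 z.2) * h (preTrait p q z.2 z.1)
      - h z.1 * h z.2 with hGdef
  have hG : Integrable G := by
    simpa [hGdef, mul_assoc, Pi.sub_def] using (hHL.const_mul (1 / |p ^ 2 - q ^ 2|)).sub hH
  have hGval : ∫ z : ℝ × ℝ, G z = 0 := by
    have e1 : Integrable (fun z : ℝ × ℝ =>
        (1 / |p ^ 2 - q ^ 2|) * h (preTrait p q z.1 z.2) * h (preTrait p q z.2 z.1)) := by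
      simpa [mul_assoc] using hHL.const_mul (1 / |p ^ 2 - q ^ 2|)
    rw [hGdef]
    rw [integral_sub e1 hH, hIprod]
    have e2 : ∫ z : ℝ × ℝ,
        (1 / |p ^ 2 - q ^ 2|) * h (preTrait p q z.1 z.2) * h (preTrait p q z.2 z.1)
        = (1 / |p ^ 2 - q ^ 2|) * ∫ z : ℝ × ℝ,
            h (preTrait p q z.1 z.2) * h (preTrait p q z.2 z.1) := by
      simp_rw [mul_assoc]; exact integral_const_mul _ _
    rw [e2, hval]
    field_simp
    ring
  have hGprod : Integrable G (volume.prod volume) := by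
    rwa [← Measure.volume_eq_prod]
  have hcoll : collOp p q h = fun v => ∫ vs, G (v, vs) := rfl
  constructor
  · rw [hcoll]; exact hGprod.integral_prod_left
  · rw [hcoll]
    have hu : Integrable (Function.uncurry fun x y => G (x, y)) (volume.prod volume) := by
      exact hGprod
    have := integral_integral hu
    rw [this, ← Measure.volume_eq_prod]
    simpa using hGval

/-- for nonnegative solutions `f₁, …, f_N` of the networked kinetic system
`∂ₜ f_i = λ Q(f_i, f_i) + χ(Σ_j a_{ij} f_j − f_i)`, integrable in `v` at each time,
differentiable in time, and with time derivatives dominated by a fixed integrable function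
on compact time intervals, the masses `ρ_i(t) = ∫ f_i(v,t) dv` are differentiable and satisfy
`ρ_i'(t) = χ(Σ_j a_{ij} ρ_j(t) − ρ_i(t))`. -/
theorem networked_mass_equations
    (N : ℕ) (hN : 1 ≤ N) (lam χ : ℝ) (hlam : 0 < lam) (hχ : 0 < χ)
    (A : Matrix (Fin N) (Fin N) ℝ)
    (hA_nonneg : ∀ i j, 0 ≤ A i j)
    (hA_stoch : ∀ j, ∑ i, A i j = 1)
    (p q : ℝ) (hp : 0 ≤ p) (hq : 0 ≤ q) (hpq : p ≠ q)
    (f : Fin N → ℝ → ℝ → ℝ)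
    (hf_int : ∀ i t, Integrable (fun v => f i v t))
    (hf_nonneg : ∀ i v t, 0 ≤ f i v t)
    (hf_pde : ∀ i v t, HasDerivAt (fun s => f i v s)
      (lam * collOp p q (fun w => f i w t) v
        + χ * ((∑ j, A i j * f j v t) - f i v t)) t)
    (hf_dom : ∀ i, ∀ T > (0 : ℝ), ∃ g : ℝ → ℝ, Integrable g ∧
      ∀ t ∈ Set.Icc (0 : ℝ) T, ∀ v, |deriv (fun s => f i v s) t| ≤ g v) :
    ∀ i, ∀ t > (0 : ℝ),
      HasDerivAt (fun s => ∫ v, f i v s)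
        (χ * ((∑ j, A i j * ∫ v, f j v t) - ∫ v, f i v t)) t := by
  intro i t ht
  have hc : p ^ 2 - q ^ 2 ≠ 0 := by
    have h1 : p + q ≠ 0 := by
      intro h0
      exact hpq (le_antisymm (by linarith) (by linarith))
    have h2 : p - q ≠ 0 := sub_ne_zero.2 hpq
    have h3 : p ^ 2 - q ^ 2 = (p + q) * (p - q) := by ring
    rw [h3]; exact mul_ne_zero h1 h2
  obtain ⟨g, hg_int, hg_bd⟩ := hf_dom i (t + 1) (by linarith)
  have hε0 : 0 < min t 1 := lt_min ht one_pos
  have hball : ∀ s ∈ Metric.ball t (min t 1), s ∈ Set.Icc (0 : ℝ) (t + 1) := by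
    intro s hs
    rw [Metric.mem_ball, Real.dist_eq, abs_lt] at hs
    have h1 := min_le_left t 1
    have h2 := min_le_right t 1
    exact ⟨by linarith [hs.1], by linarith [hs.2]⟩
  set F' : ℝ → ℝ → ℝ := fun s v =>
    lam * collOp p q (fun w => f i w s) v
      + χ * ((∑ j, A i j * f j v s) - f i v s) with hF'def
  obtain ⟨hQint, hQzero⟩ := collOp_key p q hc (fun v => f i v t) (hf_int i t)
  have hsum_int : Integrable (fun v => ∑ j, A i j * f j v t) :=
    integrable_finset_sum _ fun j _ => (hf_int j t).const_mul (A i j)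
  have hI2 : Integrable (fun v => χ * ((∑ j, A i j * f j v t) - f i v t)) :=
    (hsum_int.sub (hf_int i t)).const_mul χ
  have hF't_int : Integrable (F' t) := (hQint.const_mul lam).add hI2
  have key := hasDerivAt_integral_of_dominated_loc_of_deriv_le (μ := volume)
    (F := fun s v => f i v s) (F' := F') (x₀ := t) (bound := g) (Metric.ball_mem_nhds t hε0)
    (Filter.Eventually.of_forall fun s => (hf_int i s).aestronglyMeasurable)
    (hf_int i t) hF't_int.aestronglyMeasurable
    (Filter.Eventually.of_forall fun v s hs => by
      have hd : deriv (fun s' => f i v s') s = F' s v := (hf_pde i v s).deriv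
      have : ‖F' s v‖ = |deriv (fun s' => f i v s') s| := by
        rw [hd, Real.norm_eq_abs]
      rw [this]
      exact hg_bd s (hball s hs) v)
    hg_int
    (Filter.Eventually.of_forall fun v s hs => hf_pde i v s)
  have hval : ∫ v, F' t v = χ * ((∑ j, A i j * ∫ v, f j v t) - ∫ v, f i v t) := by
    rw [hF'def]
    rw [integral_add (hQint.const_mul lam) hI2, integral_const_mul, hQzero, mul_zero, zero_add,
      integral_const_mul]
    congr 1
    rw [integral_sub hsum_int (hf_int i t)]
    congr 1
    rw [integral_finset_sum _ fun j _ => (hf_int j t).const_mul (A i j)]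
    exact Finset.sum_congr rfl fun j _ => integral_const_mul _ _
  rw [← hval]
  exact key.2
end

section
/- Fix λ > 0 and p, q ≥ 0 with p² + q² ≤ 1, and a common mean m ∈ ℝ. Let φ, ψ : ℝ × [0, ∞) → ℂ be such that for each t, φ(·, t) and ψ(·, t) are the Fourier transforms (with sign convention μ̂(ξ) = ∫ e^{−iξv} dμ(v)) of probability measures on ℝ with finite second moments and first moment equal to m, with t ↦ φ(ξ, t), ψ(ξ, t) differentiable and satisfying the Fourier-transformed homogeneous Boltzmann-type equation ∂_t φ(ξ, t) = λ( φ(pξ, t) φ(qξ, t) − φ(ξ, t) ) and likewise for ψ. Then for all t ≥ 0, sup_{ξ ≠ 0} |φ(ξ, t) − ψ(ξ, t)|/ξ² ≤ e^{−λ(1 − p² − q²) t} sup_{ξ ≠ 0} |φ(ξ, 0) − ψ(ξ, 0)|/ξ²; i.e., the 2-Fourier metric between the corresponding measures decays (strictly, if p² + q² < 1) exponentially in time. -/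
open MeasureTheory

open Set

lemma norm_exp_neg_I_mul_ofReal (x : ℝ) : ‖Complex.exp (-(Complex.I * x))‖ = 1 := by
  rw [Complex.norm_exp]
  simp

lemma norm_cexp_sub_one_le (x : ℝ) : ‖Complex.exp (-(Complex.I * x)) - 1‖ ≤ |x| := by
  have hd : ∀ s : ℝ, HasDerivAt (fun s : ℝ => Complex.exp (-(Complex.I * s)) - 1)
      (Complex.exp (-(Complex.I * s)) * (-Complex.I)) s := by
    intro s
    have h1 : HasDerivAt (fun s : ℝ => -(Complex.I * (s : ℂ))) (-Complex.I) s := by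
      have := (((hasDerivAt_id s).ofReal_comp).const_mul Complex.I).neg
      simp at this
      exact this
    simpa using (h1.cexp).sub_const 1
  have := Convex.norm_image_sub_le_of_norm_hasDerivWithin_le
    (f := fun s : ℝ => Complex.exp (-(Complex.I * s)) - 1)
    (f' := fun s : ℝ => Complex.exp (-(Complex.I * s)) * (-Complex.I))
    (fun s _ => (hd s).hasDerivWithinAt) (C := 1)
    (fun s _ => by rw [norm_mul, norm_exp_neg_I_mul_ofReal]; simp) convex_univ (mem_univ 0)
    (mem_univ x)
  simpa using this

lemma norm_cexp_taylor_nonneg {x : ℝ} (hx : 0 ≤ x) :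
    ‖Complex.exp (-(Complex.I * x)) - 1 + Complex.I * x‖ ≤ x ^ 2 / 2 := by
  set f : ℝ → ℂ := fun s => Complex.exp (-(Complex.I * s)) - 1 + Complex.I * s with hf
  have hd : ∀ s : ℝ, HasDerivAt f
      (Complex.exp (-(Complex.I * s)) * (-Complex.I) + Complex.I) s := by
    intro s
    have h1 : HasDerivAt (fun s : ℝ => -(Complex.I * (s : ℂ))) (-Complex.I) s := by
      have := (((hasDerivAt_id s).ofReal_comp).const_mul Complex.I).neg
      simp at this
      exact this
    have h2 : HasDerivAt (fun s : ℝ => Complex.I * (s : ℂ)) Complex.I s := by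
      simpa using ((hasDerivAt_id s).ofReal_comp).const_mul Complex.I
    have := ((h1.cexp).sub_const 1).add h2
    exact this.congr_deriv (by ring)
  have key := image_norm_le_of_norm_deriv_right_le_deriv_boundary
    (f := f) (f' := fun s => Complex.exp (-(Complex.I * s)) * (-Complex.I) + Complex.I)
    (a := 0) (b := x)
    (fun s _ => (hd s).continuousAt.continuousWithinAt)
    (fun s hs => (hd s).hasDerivWithinAt)
    (B := fun s => s ^ 2 / 2) (B' := fun s => s)
    (by simp [hf])
    (fun s => by simpa using ((hasDerivAt_pow 2 s).div_const 2))
    (fun s hs => by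
      have : Complex.exp (-(Complex.I * s)) * (-Complex.I) + Complex.I
          = (-Complex.I) * (Complex.exp (-(Complex.I * s)) - 1) := by ring
      rw [this, norm_mul]
      simpa using (norm_cexp_sub_one_le s).trans_eq (abs_of_nonneg hs.1))
  exact key (right_mem_Icc.2 hx)

lemma norm_cexp_taylor (x : ℝ) :
    ‖Complex.exp (-(Complex.I * x)) - 1 + Complex.I * x‖ ≤ x ^ 2 / 2 := by
  rcases le_total 0 x with h | h
  · exact norm_cexp_taylor_nonneg h
  · have h1 := norm_cexp_taylor_nonneg (neg_nonneg.2 h)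
    have h2 : ((starRingEnd ℂ)
        (Complex.exp (-(Complex.I * x)) - 1 + Complex.I * x))
        = Complex.exp (-(Complex.I * (-x : ℝ))) - 1 + Complex.I * (-x : ℝ) := by
      simp only [map_add, map_sub, map_mul, map_one, Complex.conj_I, ← Complex.exp_conj,
        map_neg, Complex.conj_ofReal, Complex.ofReal_neg]
      ring_nf
    calc ‖Complex.exp (-(Complex.I * x)) - 1 + Complex.I * x‖
        = ‖Complex.exp (-(Complex.I * (-x : ℝ))) - 1 + Complex.I * (-x : ℝ)‖ := by
          rw [← h2, RCLike.norm_conj]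
      _ ≤ (-x) ^ 2 / 2 := h1
      _ = x ^ 2 / 2 := by ring

lemma norm_fourierTr_le (μ : Measure ℝ) [IsProbabilityMeasure μ] (ξ : ℝ) :
    ‖fourierTr μ ξ‖ ≤ 1 := by
  refine (norm_integral_le_integral_norm _).trans ?_
  have : ∀ v : ℝ, ‖Complex.exp (-(Complex.I * ξ * v))‖ = 1 := by
    intro v
    have : (Complex.I * ξ * v : ℂ) = Complex.I * ((ξ * v : ℝ) : ℂ) := by push_cast; ring
    rw [this, norm_exp_neg_I_mul_ofReal]
  simp [this]

lemma fourierTr_zero (μ : Measure ℝ) [IsProbabilityMeasure μ] : fourierTr μ 0 = 1 := by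
  simp [fourierTr]

lemma integrable_cexp (μ : Measure ℝ) [IsProbabilityMeasure μ] (ξ : ℝ) :
    Integrable (fun v : ℝ => Complex.exp (-(Complex.I * ξ * v))) μ := by
  refine Integrable.mono' (integrable_const 1) ?_ ?_
  · exact (Complex.continuous_exp.comp (by continuity)).aestronglyMeasurable
  · refine ae_of_all _ fun v => ?_
    have : (Complex.I * ξ * v : ℂ) = Complex.I * ((ξ * v : ℝ) : ℂ) := by push_cast; ring
    rw [this, norm_exp_neg_I_mul_ofReal]

lemma integrable_id_of_sq (μ : Measure ℝ) [IsProbabilityMeasure μ]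
    (h2 : Integrable (fun v : ℝ => v ^ 2) μ) : Integrable (fun v : ℝ => v) μ := by
  refine Integrable.mono' ((integrable_const 1).add h2) aestronglyMeasurable_id
    (ae_of_all _ fun v => ?_)
  simp only [Pi.add_apply, Real.norm_eq_abs]
  nlinarith [sq_nonneg (|v| - 1), sq_abs v, abs_nonneg v]

lemma fourierTr_sub_norm_le (μ ν : Measure ℝ) [IsProbabilityMeasure μ] [IsProbabilityMeasure ν]
    (hμ2 : Integrable (fun v : ℝ => v ^ 2) μ) (hν2 : Integrable (fun v : ℝ => v ^ 2) ν)
    (hm : ∫ v, v ∂μ = ∫ v, v ∂ν) (ξ : ℝ) :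
    ‖fourierTr μ ξ - fourierTr ν ξ‖ ≤ ξ ^ 2 * ((∫ v, v ^ 2 ∂μ) + ∫ v, v ^ 2 ∂ν) / 2 := by
  set g : ℝ → ℂ := fun v => Complex.exp (-(Complex.I * ξ * v)) - 1 + Complex.I * ξ * v with hg
  have hgbound : ∀ v : ℝ, ‖g v‖ ≤ ξ ^ 2 / 2 * v ^ 2 := by
    intro v
    have h1 : (Complex.I * ξ * v : ℂ) = Complex.I * ((ξ * v : ℝ) : ℂ) := by push_cast; ring
    have := norm_cexp_taylor (ξ * v)
    rw [← h1] at this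
    calc ‖g v‖ = ‖Complex.exp (-(Complex.I * ξ * v)) - 1 + Complex.I * ξ * v‖ := rfl
      _ ≤ (ξ * v) ^ 2 / 2 := this
      _ = ξ ^ 2 / 2 * v ^ 2 := by ring
  have key : ∀ (κ : Measure ℝ), IsProbabilityMeasure κ → Integrable (fun v : ℝ => v ^ 2) κ →
      fourierTr κ ξ = (∫ v, g v ∂κ) + 1 - Complex.I * ξ * ((∫ v, v ∂κ : ℝ) : ℂ) := by
    intro κ hκ hκ2
    have hv1 : Integrable (fun v : ℝ => v) κ := integrable_id_of_sq κ hκ2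
    have hvc : Integrable (fun v : ℝ => Complex.I * ξ * ((v : ℝ) : ℂ)) κ := by
      simpa using (hv1.ofReal (𝕜 := ℂ)).const_mul (Complex.I * ξ)
    have hge : Integrable g κ := by
      have := ((integrable_cexp κ ξ).sub (integrable_const 1)).add hvc
      exact this
    have : fourierTr κ ξ = ∫ v, (g v + 1 - Complex.I * ξ * ((v : ℝ) : ℂ)) ∂κ := by
      unfold fourierTr
      congr 1
      funext v
      simp [hg]
      ring
    have e1 := integral_sub (hge.add (integrable_const (1:ℂ))) hvc
    have e2 := integral_add hge (integrable_const (1:ℂ))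
    have e3 : ∫ v : ℝ, Complex.I * ξ * ((v : ℝ) : ℂ) ∂κ
        = Complex.I * ξ * ((∫ v, v ∂κ : ℝ) : ℂ) := by
      rw [integral_const_mul]
      congr 1
      exact integral_ofReal
    simp only [Pi.add_apply] at e1
    rw [this, e1, e2, e3]
    simp [measure_univ]
  have hdiff : fourierTr μ ξ - fourierTr ν ξ = (∫ v, g v ∂μ) - ∫ v, g v ∂ν := by
    rw [key μ ‹_› hμ2, key ν ‹_› hν2, hm]
    ring
  have h1 : ‖∫ v, g v ∂μ‖ ≤ ξ ^ 2 / 2 * ∫ v, v ^ 2 ∂μ := by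
    have := norm_integral_le_of_norm_le (hμ2.const_mul (ξ ^ 2 / 2))
      (ae_of_all _ fun v => hgbound v)
    rwa [integral_const_mul] at this
  have h2 : ‖∫ v, g v ∂ν‖ ≤ ξ ^ 2 / 2 * ∫ v, v ^ 2 ∂ν := by
    have := norm_integral_le_of_norm_le (hν2.const_mul (ξ ^ 2 / 2))
      (ae_of_all _ fun v => hgbound v)
    rwa [integral_const_mul] at this
  calc ‖fourierTr μ ξ - fourierTr ν ξ‖ ≤ ‖∫ v, g v ∂μ‖ + ‖∫ v, g v ∂ν‖ := by
        rw [hdiff]; exact norm_sub_le _ _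
    _ ≤ ξ ^ 2 / 2 * ∫ v, v ^ 2 ∂μ + ξ ^ 2 / 2 * ∫ v, v ^ 2 ∂ν := add_le_add h1 h2
    _ = ξ ^ 2 * ((∫ v, v ^ 2 ∂μ) + ∫ v, v ^ 2 ∂ν) / 2 := by ring

/-- exponential decay of the 2-Fourier metric along solutions of the
Fourier-transformed homogeneous Boltzmann-type equation
`∂ₜ f̂(ξ,t) = λ( f̂(pξ,t) f̂(qξ,t) − f̂(ξ,t) )` with `p² + q² ≤ 1`: for Fourier transforms
`φ, ψ` of probability measures with finite second moments and common first moment `m`,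
`sup_{ξ≠0} |φ(ξ,t) − ψ(ξ,t)|/ξ² ≤ e^{−λ(1−p²−q²)t} sup_{ξ≠0} |φ(ξ,0) − ψ(ξ,0)|/ξ²`. -/
theorem fourier_metric_exponential_decay
    (lam p q m : ℝ) (hlam : 0 < lam) (hp : 0 ≤ p) (hq : 0 ≤ q)
    (hpq : p ^ 2 + q ^ 2 ≤ 1)
    (φ ψ : ℝ → ℝ → ℂ) (μ ν : ℝ → Measure ℝ)
    (hμ_prob : ∀ t ≥ (0 : ℝ), IsProbabilityMeasure (μ t))
    (hν_prob : ∀ t ≥ (0 : ℝ), IsProbabilityMeasure (ν t))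
    (hμ2 : ∀ t ≥ (0 : ℝ), Integrable (fun v : ℝ => v ^ 2) (μ t))
    (hν2 : ∀ t ≥ (0 : ℝ), Integrable (fun v : ℝ => v ^ 2) (ν t))
    (hμm : ∀ t ≥ (0 : ℝ), ∫ v, v ∂(μ t) = m)
    (hνm : ∀ t ≥ (0 : ℝ), ∫ v, v ∂(ν t) = m)
    (hφ : ∀ t ≥ (0 : ℝ), ∀ ξ, φ ξ t = fourierTr (μ t) ξ)
    (hψ : ∀ t ≥ (0 : ℝ), ∀ ξ, ψ ξ t = fourierTr (ν t) ξ)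
    (hφ_ode : ∀ ξ, ∀ t ≥ (0 : ℝ), HasDerivWithinAt (fun s => φ ξ s)
      ((lam : ℂ) * (φ (p * ξ) t * φ (q * ξ) t - φ ξ t)) (Set.Ici 0) t)
    (hψ_ode : ∀ ξ, ∀ t ≥ (0 : ℝ), HasDerivWithinAt (fun s => ψ ξ s)
      ((lam : ℂ) * (ψ (p * ξ) t * ψ (q * ξ) t - ψ ξ t)) (Set.Ici 0) t) :
    ∀ t ≥ (0 : ℝ),
      sSup {r : ℝ | ∃ ξ : ℝ, ξ ≠ 0 ∧ r = ‖φ ξ t - ψ ξ t‖ / ξ ^ 2} ≤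
        Real.exp (-lam * (1 - p ^ 2 - q ^ 2) * t) *
          sSup {r : ℝ | ∃ ξ : ℝ, ξ ≠ 0 ∧ r = ‖φ ξ 0 - ψ ξ 0‖ / ξ ^ 2} := by
  haveI := hμ_prob 0 le_rfl
  haveI := hν_prob 0 le_rfl
  set κ : ℝ := p ^ 2 + q ^ 2 with hκdef
  have hsq : ∀ ξ : ℝ, ξ ≠ 0 → (0 : ℝ) < ξ ^ 2 := fun ξ hξ =>
    lt_of_le_of_ne (sq_nonneg ξ) (Ne.symm (pow_ne_zero 2 hξ))
  -- the set at time 0 is bounded above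
  have hbdd : BddAbove {r : ℝ | ∃ ξ : ℝ, ξ ≠ 0 ∧ r = ‖φ ξ 0 - ψ ξ 0‖ / ξ ^ 2} := by
    refine ⟨((∫ v, v ^ 2 ∂(μ 0)) + ∫ v, v ^ 2 ∂(ν 0)) / 2, ?_⟩
    rintro r ⟨ξ, hξ, rfl⟩
    rw [div_le_iff₀ (hsq ξ hξ), hφ 0 le_rfl, hψ 0 le_rfl]
    calc ‖fourierTr (μ 0) ξ - fourierTr (ν 0) ξ‖
        ≤ ξ ^ 2 * ((∫ v, v ^ 2 ∂(μ 0)) + ∫ v, v ^ 2 ∂(ν 0)) / 2 :=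
          fourierTr_sub_norm_le _ _ (hμ2 0 le_rfl) (hν2 0 le_rfl)
            (by rw [hμm 0 le_rfl, hνm 0 le_rfl]) ξ
      _ = ((∫ v, v ^ 2 ∂(μ 0)) + ∫ v, v ^ 2 ∂(ν 0)) / 2 * ξ ^ 2 := by ring
  set D0 : ℝ := sSup {r : ℝ | ∃ ξ : ℝ, ξ ≠ 0 ∧ r = ‖φ ξ 0 - ψ ξ 0‖ / ξ ^ 2} with hD0def
  have hD0 : ∀ ξ : ℝ, ‖φ ξ 0 - ψ ξ 0‖ ≤ ξ ^ 2 * D0 := by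
    intro ξ
    by_cases hξ : ξ = 0
    · subst hξ
      rw [hφ 0 le_rfl 0, hψ 0 le_rfl 0, fourierTr_zero, fourierTr_zero]
      simp
    · have h1 : ‖φ ξ 0 - ψ ξ 0‖ / ξ ^ 2 ≤ D0 := le_csSup hbdd ⟨ξ, hξ, rfl⟩
      rw [div_le_iff₀ (hsq ξ hξ)] at h1
      calc ‖φ ξ 0 - ψ ξ 0‖ ≤ D0 * ξ ^ 2 := h1
        _ = ξ ^ 2 * D0 := by ring
  have hD0nn : 0 ≤ D0 := le_trans (by positivity) (le_csSup hbdd ⟨1, one_ne_zero, rfl⟩)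
  have hφ1 : ∀ ξ : ℝ, ∀ s ≥ (0 : ℝ), ‖φ ξ s‖ ≤ 1 := by
    intro ξ s hs
    haveI := hμ_prob s hs
    rw [hφ s hs ξ]
    exact norm_fourierTr_le _ _
  have hψ1 : ∀ ξ : ℝ, ∀ s ≥ (0 : ℝ), ‖ψ ξ s‖ ≤ 1 := by
    intro ξ s hs
    haveI := hν_prob s hs
    rw [hψ s hs ξ]
    exact norm_fourierTr_le _ _
  have hnormexp : ∀ s : ℝ, ‖Complex.exp ((lam : ℂ) * s)‖ = Real.exp (lam * s) := by
    intro s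
    rw [← Complex.ofReal_mul, Complex.norm_exp, Complex.ofReal_re]
  have hexp_deriv : ∀ s : ℝ, HasDerivAt (fun s : ℝ => Complex.exp ((lam : ℂ) * s))
      ((lam : ℂ) * Complex.exp ((lam : ℂ) * s)) s := by
    intro s
    have h1 : HasDerivAt (fun s : ℝ => ((lam : ℂ) * (s : ℂ))) (lam : ℂ) s := by
      simpa using ((hasDerivAt_id s).ofReal_comp).const_mul (lam : ℂ)
    simpa [mul_comm] using h1.cexp
  have hφcont : ∀ ζ : ℝ, ∀ T : ℝ, ContinuousOn (fun s => φ ζ s) (Icc 0 T) := by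
    intro ζ T x hx
    exact ((hφ_ode ζ x hx.1).continuousWithinAt).mono Icc_subset_Ici_self
  have hψcont : ∀ ζ : ℝ, ∀ T : ℝ, ContinuousOn (fun s => ψ ζ s) (Icc 0 T) := by
    intro ζ T x hx
    exact ((hψ_ode ζ x hx.1).continuousWithinAt).mono Icc_subset_Ici_self
  -- the key inductive estimate
  have key : ∀ n : ℕ, ∀ ξ : ℝ, ∀ s : ℝ, 0 ≤ s →
      ‖φ ξ s - ψ ξ s‖ ≤ ξ ^ 2 * D0 * Real.exp (-lam * (1 - κ) * s)
        + 2 * (2 * lam * s) ^ n / (n.factorial : ℝ) := by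
    intro n
    induction n with
    | zero =>
      intro ξ s hs
      have h2 : (0 : ℝ) ≤ ξ ^ 2 * D0 * Real.exp (-lam * (1 - κ) * s) := by positivity
      have h3 := norm_sub_le (φ ξ s) (ψ ξ s)
      have h4 := hφ1 ξ s hs
      have h5 := hψ1 ξ s hs
      simp only [pow_zero, Nat.factorial_zero, Nat.cast_one]
      nlinarith
    | succ n ih =>
      intro ξ T hT
      set c : ℝ := 2 * (2 * lam) ^ (n + 1) * Real.exp (lam * T) / ((n + 1).factorial : ℝ)
        with hc
      have main := image_norm_le_of_norm_deriv_right_le_deriv_boundary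
        (f := fun s => Complex.exp ((lam : ℂ) * s) * (φ ξ s - ψ ξ s))
        (f' := fun s => Complex.exp ((lam : ℂ) * s) *
          ((lam : ℂ) * (φ (p * ξ) s * φ (q * ξ) s - ψ (p * ξ) s * ψ (q * ξ) s)))
        (a := 0) (b := T)
        (B := fun s => ξ ^ 2 * D0 * Real.exp (lam * κ * s) + c * s ^ (n + 1))
        (B' := fun s => ξ ^ 2 * D0 * (lam * κ * Real.exp (lam * κ * s))
          + c * (((n : ℝ) + 1) * s ^ n))
        ?_ ?_ ?_ ?_ ?_
      · -- conclude from `main` at T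
        have hfin := main (right_mem_Icc.2 hT)
        have hlhs : ‖Complex.exp ((lam : ℂ) * T) * (φ ξ T - ψ ξ T)‖
            = Real.exp (lam * T) * ‖φ ξ T - ψ ξ T‖ := by
          rw [norm_mul, hnormexp]
        rw [hlhs] at hfin
        have hrhs : ξ ^ 2 * D0 * Real.exp (lam * κ * T) + c * T ^ (n + 1)
            = (ξ ^ 2 * D0 * Real.exp (-lam * (1 - κ) * T)
              + 2 * (2 * lam * T) ^ (n + 1) / ((n + 1).factorial : ℝ))
              * Real.exp (lam * T) := by
          have e1 : Real.exp (lam * κ * T)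
              = Real.exp (-lam * (1 - κ) * T) * Real.exp (lam * T) := by
            rw [← Real.exp_add]; ring_nf
          rw [hc, e1]
          field_simp
          ring
        rw [hrhs] at hfin
        have hET : (0 : ℝ) < Real.exp (lam * T) := Real.exp_pos _
        calc ‖φ ξ T - ψ ξ T‖
            = Real.exp (lam * T) * ‖φ ξ T - ψ ξ T‖ / Real.exp (lam * T) := by
              field_simp
          _ ≤ (ξ ^ 2 * D0 * Real.exp (-lam * (1 - κ) * T)
              + 2 * (2 * lam * T) ^ (n + 1) / ((n + 1).factorial : ℝ))
              * Real.exp (lam * T) / Real.exp (lam * T) := by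
              gcongr
          _ = _ := by field_simp
      · -- continuity of f
        exact ((Complex.continuous_exp.comp
          (continuous_const.mul Complex.continuous_ofReal)).continuousOn).mul
          ((hφcont ξ T).sub (hψcont ξ T))
      · -- derivative of f
        intro s hs
        have h1 := (hexp_deriv s).hasDerivWithinAt (s := Ici s)
        have h2 := ((hφ_ode ξ s hs.1).mono (Ici_subset_Ici.mpr hs.1)).sub
          ((hψ_ode ξ s hs.1).mono (Ici_subset_Ici.mpr hs.1))
        have h3 := h1.mul h2
        exact h3.congr_deriv (by simp only [Pi.sub_apply]; ring)
      · -- initial bound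
        show ‖Complex.exp ((lam : ℂ) * ((0 : ℝ) : ℂ)) * (φ ξ 0 - ψ ξ 0)‖
            ≤ ξ ^ 2 * D0 * Real.exp (lam * κ * 0) + c * 0 ^ (n + 1)
        have h0 : ‖Complex.exp ((lam : ℂ) * ((0 : ℝ) : ℂ)) * (φ ξ 0 - ψ ξ 0)‖
            = ‖φ ξ 0 - ψ ξ 0‖ := by
          rw [norm_mul, hnormexp 0]
          norm_num
        have h1 : ξ ^ 2 * D0 * Real.exp (lam * κ * 0) + c * 0 ^ (n + 1) = ξ ^ 2 * D0 := by
          norm_num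
        rw [h0, h1]
        exact hD0 ξ
      · -- derivative of B
        intro x
        have hb1 : HasDerivAt (fun x : ℝ => Real.exp (lam * κ * x))
            (lam * κ * Real.exp (lam * κ * x)) x := by
          simpa [mul_comm] using ((hasDerivAt_id x).const_mul (lam * κ)).exp
        have hb2 : HasDerivAt (fun x : ℝ => x ^ (n + 1)) (((n : ℝ) + 1) * x ^ n) x := by
          convert hasDerivAt_pow (n + 1) x using 1
          · rfl
          rw [Nat.add_sub_cancel]
          push_cast
          ring
        exact (hb1.const_mul (ξ ^ 2 * D0)).add (hb2.const_mul c)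
      · -- bound on ‖f'‖
        intro s hs
        obtain ⟨hs0, hsT⟩ := hs
        have hP := ih (p * ξ) s hs0
        have hQ := ih (q * ξ) s hs0
        have hΦ : ‖φ (p * ξ) s * φ (q * ξ) s - ψ (p * ξ) s * ψ (q * ξ) s‖
            ≤ ‖φ (q * ξ) s - ψ (q * ξ) s‖ + ‖φ (p * ξ) s - ψ (p * ξ) s‖ := by
          have e : φ (p * ξ) s * φ (q * ξ) s - ψ (p * ξ) s * ψ (q * ξ) s
              = φ (p * ξ) s * (φ (q * ξ) s - ψ (q * ξ) s)
                + (φ (p * ξ) s - ψ (p * ξ) s) * ψ (q * ξ) s := by ring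
          rw [e]
          calc ‖φ (p * ξ) s * (φ (q * ξ) s - ψ (q * ξ) s)
                + (φ (p * ξ) s - ψ (p * ξ) s) * ψ (q * ξ) s‖
              ≤ ‖φ (p * ξ) s * (φ (q * ξ) s - ψ (q * ξ) s)‖
                + ‖(φ (p * ξ) s - ψ (p * ξ) s) * ψ (q * ξ) s‖ := norm_add_le _ _
            _ ≤ 1 * ‖φ (q * ξ) s - ψ (q * ξ) s‖
                + ‖φ (p * ξ) s - ψ (p * ξ) s‖ * 1 := by
                rw [norm_mul, norm_mul]
                gcongr
                · exact hφ1 _ s hs0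
                · exact hψ1 _ s hs0
            _ = _ := by ring
        have hsum : ‖φ (p * ξ) s * φ (q * ξ) s - ψ (p * ξ) s * ψ (q * ξ) s‖
            ≤ κ * ξ ^ 2 * D0 * Real.exp (-lam * (1 - κ) * s)
              + 4 * (2 * lam * s) ^ n / (n.factorial : ℝ) := by
          calc ‖φ (p * ξ) s * φ (q * ξ) s - ψ (p * ξ) s * ψ (q * ξ) s‖
              ≤ ‖φ (q * ξ) s - ψ (q * ξ) s‖ + ‖φ (p * ξ) s - ψ (p * ξ) s‖ := hΦ
            _ ≤ ((q * ξ) ^ 2 * D0 * Real.exp (-lam * (1 - κ) * s)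
                  + 2 * (2 * lam * s) ^ n / (n.factorial : ℝ))
                + ((p * ξ) ^ 2 * D0 * Real.exp (-lam * (1 - κ) * s)
                  + 2 * (2 * lam * s) ^ n / (n.factorial : ℝ)) := add_le_add hQ hP
            _ = _ := by rw [hκdef]; ring
        have hnf' : ‖Complex.exp ((lam : ℂ) * s) *
            ((lam : ℂ) * (φ (p * ξ) s * φ (q * ξ) s - ψ (p * ξ) s * ψ (q * ξ) s))‖
            = Real.exp (lam * s) * (lam *
              ‖φ (p * ξ) s * φ (q * ξ) s - ψ (p * ξ) s * ψ (q * ξ) s‖) := by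
          rw [norm_mul, norm_mul, hnormexp, Complex.norm_real, Real.norm_eq_abs,
            abs_of_pos hlam]
        rw [hnf']
        have step1 : Real.exp (lam * s) * (lam *
            ‖φ (p * ξ) s * φ (q * ξ) s - ψ (p * ξ) s * ψ (q * ξ) s‖)
            ≤ Real.exp (lam * s) * (lam * (κ * ξ ^ 2 * D0 * Real.exp (-lam * (1 - κ) * s)
              + 4 * (2 * lam * s) ^ n / (n.factorial : ℝ))) := by
          gcongr
        refine step1.trans ?_
        have e1 : Real.exp (lam * s) * Real.exp (-lam * (1 - κ) * s)
            = Real.exp (lam * κ * s) := by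
          rw [← Real.exp_add]; ring_nf
        have step2 : Real.exp (lam * s) * (lam * (κ * ξ ^ 2 * D0 * Real.exp (-lam * (1 - κ) * s)
              + 4 * (2 * lam * s) ^ n / (n.factorial : ℝ)))
            = ξ ^ 2 * D0 * (lam * κ * Real.exp (lam * κ * s))
              + 4 * lam * Real.exp (lam * s) * (2 * lam * s) ^ n / (n.factorial : ℝ) := by
          rw [← e1]; ring
        rw [step2]
        have step3 : c * (((n : ℝ) + 1) * s ^ n)
            = 4 * lam * Real.exp (lam * T) * (2 * lam * s) ^ n / (n.factorial : ℝ) := by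
          rw [hc, Nat.factorial_succ]
          have h1 : (n.factorial : ℝ) ≠ 0 := by positivity
          push_cast
          field_simp
          ring
        rw [step3]
        have hss : Real.exp (lam * s) ≤ Real.exp (lam * T) :=
          Real.exp_le_exp.2 (mul_le_mul_of_nonneg_left hsT.le hlam.le)
        gcongr
  -- pass to the limit n → ∞
  have lim : ∀ ξ : ℝ, ∀ t : ℝ, 0 ≤ t →
      ‖φ ξ t - ψ ξ t‖ ≤ ξ ^ 2 * D0 * Real.exp (-lam * (1 - κ) * t) := by
    intro ξ t ht
    have htend : Filter.Tendsto
        (fun n : ℕ => ξ ^ 2 * D0 * Real.exp (-lam * (1 - κ) * t)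
          + 2 * (2 * lam * t) ^ n / (n.factorial : ℝ)) Filter.atTop
        (nhds (ξ ^ 2 * D0 * Real.exp (-lam * (1 - κ) * t))) := by
      have h1 : Filter.Tendsto (fun n : ℕ => (2 * lam * t) ^ n / (n.factorial : ℝ))
          Filter.atTop (nhds 0) := FloorSemiring.tendsto_pow_div_factorial_atTop _
      have h2 := h1.const_mul (2 : ℝ)
      have h3 := (tendsto_const_nhds (x := ξ ^ 2 * D0 * Real.exp (-lam * (1 - κ) * t))
        (f := Filter.atTop (α := ℕ))).add h2
      simpa [mul_div_assoc] using h3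
    exact ge_of_tendsto htend (Filter.Eventually.of_forall fun n => key n ξ t ht)
  intro t ht
  refine csSup_le ⟨‖φ 1 t - ψ 1 t‖ / 1 ^ 2, 1, one_ne_zero, rfl⟩ ?_
  rintro r ⟨ξ, hξ, rfl⟩
  rw [div_le_iff₀ (hsq ξ hξ)]
  have hexps : -lam * (1 - κ) * t = -lam * (1 - p ^ 2 - q ^ 2) * t := by
    rw [hκdef]; ring
  calc ‖φ ξ t - ψ ξ t‖ ≤ ξ ^ 2 * D0 * Real.exp (-lam * (1 - κ) * t) := lim ξ t ht
    _ = Real.exp (-lam * (1 - p ^ 2 - q ^ 2) * t) * D0 * ξ ^ 2 := by rw [hexps]; ring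
end
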